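/- Fix p ≥ 1 and block sizes n : Fin p → ℕ with n k ≥ 1, let ι := Σ k, Fin (n k), let G := ∏_k U(n k) with its Haar probability measure μ, and for ρ ∈ M_ι(ℂ) define the block twirl Λ(ρ) := ∫_G (blockDiagonal' V) · ρ · (blockDiagonal' V)† dμ(V). Then Λ(ρ) = Λ(diag(ρ)), where diag(ρ) is the diagonal matrix with the same diagonal entries as ρ; that is, the block twirl depends only on the diagonal part of ρ. -/

import Mathlib

open MeasureTheory Matrix

attribute [local instance] Matrix.normedAddCommGroup Matrix.normedSpace

noncomputable instance (m : ℕ) : MeasurableSpace (Matrix.unitaryGroup (Fin m) ℂ) := borel _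
instance (m : ℕ) : BorelSpace (Matrix.unitaryGroup (Fin m) ℂ) := ⟨rfl⟩

/-!
For a sign vector `ε : ι → ℤˣ`, the diagonal sign matrix `D_ε` is the block-diagonal image of an
element of `∏ₖ U(n k)`, so right invariance of the Haar measure gives `Λ(ρ) = Λ(D_ε ρ D_ε)`.
Averaging over all `2 ^ |ι|` sign vectors kills the off-diagonal entries,
`∑_ε D_ε ρ D_ε = 2 ^ |ι| • diag ρ`, and linearity of the twirl `Λ` finishes the proof.
Right invariance holds because the right translates of a Haar probability measure are again Haar
probability measures, hence equal to it by uniqueness.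
-/

instance Matrix.instSecondCountableTopology {m n R : Type*} [Countable m] [Countable n]
    [TopologicalSpace R] [SecondCountableTopology R] : SecondCountableTopology (Matrix m n R) :=
  inferInstanceAs (SecondCountableTopology (m → n → R))

instance Matrix.unitaryGroup.instSecondCountableTopology {n R : Type*} [Fintype n]
    [DecidableEq n] [CommRing R] [StarRing R] [TopologicalSpace R] [SecondCountableTopology R] :
    SecondCountableTopology (unitaryGroup n R) :=
  TopologicalSpace.Subtype.secondCountableTopology _

/- `Integrable` on matrices needs `ContinuousENorm` for the product topology of `Matrix`; the one
derived from the local sup-norm instance is stated for the norm topology and is not found. -/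
instance Matrix.instContinuousENorm {m n R : Type*} [Fintype m] [Fintype n]
    [SeminormedAddCommGroup R] : ContinuousENorm (Matrix m n R) :=
  inferInstanceAs (ContinuousENorm (m → n → R))

instance Matrix.unitaryGroup.instCompactSpace {n 𝕜 : Type*} [Fintype n] [DecidableEq n]
    [RCLike 𝕜] : CompactSpace (unitaryGroup n 𝕜) :=
  have hclosed : IsClosed (unitaryGroup n 𝕜 : Set (Matrix n n 𝕜)) := isClosed_unitary
  isCompact_iff_compactSpace.mp <| Metric.isCompact_of_isClosed_isBounded hclosed <|
    isBounded_iff_forall_norm_le.2 ⟨1, fun _ hU => entrywise_sup_norm_bound_of_unitary hU⟩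

theorem MeasureTheory.Measure.isMulRightInvariant_of_isProbabilityMeasure {G : Type*} [Group G]
    [TopologicalSpace G] [IsTopologicalGroup G] [LocallyCompactSpace G] [MeasurableSpace G]
    [BorelSpace G] (μ : Measure G) [μ.IsHaarMeasure] [IsProbabilityMeasure μ] :
    μ.IsMulRightInvariant where
  map_mul_right_eq_self g :=
    haveI := isProbabilityMeasure_map (μ := μ) (continuous_mul_const g).aemeasurable
    isHaarMeasure_eq_of_isProbabilityMeasure _ μ

theorem Int.sum_units_apply_mul_apply {ι : Type*} [Fintype ι] [DecidableEq ι] (i j : ι) :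
    ∑ ε : ι → ℤˣ, ((ε i * ε j : ℤˣ) : ℤ) = if i = j then 2 ^ Fintype.card ι else 0 := by
  split_ifs with hij
  · subst hij
    simp [Int.units_mul_self, Fintype.card_units_int]
  -- flipping the sign of `ε i` negates the summand
  · refine Finset.sum_ninvolution (Pi.mulSingle i (-1) * ·) (fun ε => ?_) (fun ε _ => ?_)
      (fun _ => Finset.mem_univ _) (fun ε => ?_)
    · simp [Ne.symm hij]
    · simpa [funext_iff] using ⟨i, by simp⟩
    · simp [← mul_assoc, ← Pi.mulSingle_mul]

namespace Matrix

variable {ι R : Type*} [DecidableEq ι]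

variable (R) in
def signDiagonal [Ring R] (ε : ι → ℤˣ) : Matrix ι ι R :=
  diagonal fun i => ((ε i : ℤ) : R)

theorem star_signDiagonal [Ring R] [StarRing R] (ε : ι → ℤˣ) :
    star (signDiagonal R ε) = signDiagonal R ε := by
  simp [signDiagonal, star_eq_conjTranspose]

theorem signDiagonal_mem_unitaryGroup [Fintype ι] [CommRing R] [StarRing R] (ε : ι → ℤˣ) :
    signDiagonal R ε ∈ unitaryGroup ι R := by
  rw [mem_unitaryGroup_iff, star_signDiagonal, signDiagonal, diagonal_mul_diagonal,
    ← diagonal_one]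
  simp [← Int.cast_mul, ← Units.val_mul, Int.units_mul_self]

theorem sum_signDiagonal_mul_mul_signDiagonal [Fintype ι] [CommRing R] (A : Matrix ι ι R) :
    ∑ ε : ι → ℤˣ, signDiagonal R ε * A * signDiagonal R ε
      = (2 ^ Fintype.card ι : R) • diagonal A.diag := by
  ext i j
  have hentry (ε : ι → ℤˣ) : (signDiagonal R ε * A * signDiagonal R ε) i j
      = A i j * (((ε i * ε j : ℤˣ) : ℤ) : R) := by
    simp only [signDiagonal, mul_diagonal, diagonal_mul, Units.val_mul, Int.cast_mul]
    ring
  simp only [sum_apply, hentry, ← Finset.mul_sum, ← Int.cast_sum, Int.sum_units_apply_mul_apply]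
  by_cases hij : i = j
  · subst hij
    simp [mul_comm]
  · simp [hij]

end Matrix

section Twirl

variable {G ι 𝕜 : Type*} [Group G] [MeasurableSpace G] [Fintype ι] [DecidableEq ι] [RCLike 𝕜]

noncomputable def twirl (μ : Measure G) (B : G →* Matrix ι ι 𝕜) (A : Matrix ι ι 𝕜) :
    Matrix ι ι 𝕜 :=
  ∫ V, B V * A * star (B V) ∂μ

variable (μ : Measure G) (B : G →* Matrix ι ι 𝕜)

theorem twirl_smul (c : 𝕜) (A : Matrix ι ι 𝕜) : twirl μ B (c • A) = c • twirl μ B A := by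
  simp only [twirl, Matrix.mul_smul, Matrix.smul_mul, integral_smul]

theorem twirl_conj [MeasurableMul G] [μ.IsMulRightInvariant] (g : G) (A : Matrix ι ι 𝕜) :
    twirl μ B (B g * A * star (B g)) = twirl μ B A :=
  calc twirl μ B (B g * A * star (B g))
      = ∫ V, B (V * g) * A * star (B (V * g)) ∂μ := by
        simp only [twirl, map_mul, star_mul, Matrix.mul_assoc]
    _ = twirl μ B A := integral_mul_right_eq_self (fun V => B V * A * star (B V)) g

variable [TopologicalSpace G] [OpensMeasurableSpace G] [CompactSpace G] [IsFiniteMeasure μ] {B}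

theorem integrable_mul_mul_star (hB : Continuous B) (A : Matrix ι ι 𝕜) :
    Integrable (fun V => B V * A * star (B V)) μ :=
  ((hB.mul continuous_const).mul hB.star).integrable_of_hasCompactSupport (.of_compactSpace _)

theorem twirl_sum (hB : Continuous B) {κ : Type*} (s : Finset κ) (A : κ → Matrix ι ι 𝕜) :
    twirl μ B (∑ k ∈ s, A k) = ∑ k ∈ s, twirl μ B (A k) := by
  simp only [twirl, Finset.mul_sum, Finset.sum_mul]
  exact integral_finsetSum s fun k _ => integrable_mul_mul_star μ hB (A k)

theorem twirl_diagonal_diag [MeasurableMul G] [μ.IsMulRightInvariant] (hB : Continuous B)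
    (hsign : ∀ ε : ι → ℤˣ, ∃ g, B g = signDiagonal 𝕜 ε) (A : Matrix ι ι 𝕜) :
    twirl μ B (diagonal A.diag) = twirl μ B A := by
  have hconj (ε : ι → ℤˣ) :
      twirl μ B (signDiagonal 𝕜 ε * A * signDiagonal 𝕜 ε) = twirl μ B A := by
    obtain ⟨g, hg⟩ := hsign ε
    simpa only [hg, star_signDiagonal] using twirl_conj μ B g A
  refine smul_right_injective _ (pow_ne_zero (Fintype.card ι) (two_ne_zero (α := 𝕜))) ?_
  calc (2 ^ Fintype.card ι : 𝕜) • twirl μ B (diagonal A.diag)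
      = twirl μ B (∑ ε : ι → ℤˣ, signDiagonal 𝕜 ε * A * signDiagonal 𝕜 ε) := by
        rw [sum_signDiagonal_mul_mul_signDiagonal, twirl_smul]
    _ = ∑ _ε : ι → ℤˣ, twirl μ B A := by
        rw [twirl_sum μ hB]
        exact Finset.sum_congr rfl fun ε _ => hconj ε
    _ = (2 ^ Fintype.card ι : 𝕜) • twirl μ B A := by
        rw [Finset.sum_const, Finset.card_univ, Fintype.card_fun, Fintype.card_units_int,
          ← Nat.cast_smul_eq_nsmul 𝕜, Nat.cast_pow, Nat.cast_ofNat]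

end Twirl

section BlockDiagonal

variable {o : Type*} [Fintype o] [DecidableEq o] {m : o → Type*} [∀ k, Fintype (m k)]
  [∀ k, DecidableEq (m k)] {𝕜 : Type*} [RCLike 𝕜]

variable (m 𝕜) in
def blockDiagonalUnitary :
    (∀ k, unitaryGroup (m k) 𝕜) →* Matrix (Σ k, m k) (Σ k, m k) 𝕜 where
  toFun V := blockDiagonal' fun k => (V k : Matrix (m k) (m k) 𝕜)
  map_one' := blockDiagonal'_one
  map_mul' _ _ := blockDiagonal'_mul _ _

theorem continuous_blockDiagonalUnitary : Continuous (blockDiagonalUnitary m 𝕜) :=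
  Continuous.matrix_blockDiagonal' <|
    continuous_pi fun k => continuous_subtype_val.comp (continuous_apply k)

theorem exists_blockDiagonalUnitary_eq_signDiagonal (ε : (Σ k, m k) → ℤˣ) :
    ∃ V, blockDiagonalUnitary m 𝕜 V = signDiagonal 𝕜 ε :=
  ⟨fun k => ⟨signDiagonal 𝕜 fun x => ε ⟨k, x⟩, signDiagonal_mem_unitaryGroup _⟩,
    blockDiagonal'_diagonal fun k x => ((ε ⟨k, x⟩ : ℤ) : 𝕜)⟩

end BlockDiagonal

theorem block_twirl_eq_twirl_of_diagonal_general (p : ℕ)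
    (n : Fin p → ℕ)
    (μ : Measure (∀ k, Matrix.unitaryGroup (Fin (n k)) ℂ))
    [μ.IsHaarMeasure] [IsProbabilityMeasure μ]
    (ρ : Matrix (Σ k, Fin (n k)) (Σ k, Fin (n k)) ℂ) :
    (∫ V : ∀ k, Matrix.unitaryGroup (Fin (n k)) ℂ,
        Matrix.blockDiagonal' (fun k => (V k : Matrix (Fin (n k)) (Fin (n k)) ℂ)) * ρ *
          star (Matrix.blockDiagonal' (fun k => (V k : Matrix (Fin (n k)) (Fin (n k)) ℂ))) ∂μ)
      = ∫ V : ∀ k, Matrix.unitaryGroup (Fin (n k)) ℂ,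
          Matrix.blockDiagonal' (fun k => (V k : Matrix (Fin (n k)) (Fin (n k)) ℂ)) *
            Matrix.diagonal (fun i => ρ i i) *
            star (Matrix.blockDiagonal' (fun k => (V k : Matrix (Fin (n k)) (Fin (n k)) ℂ))) ∂μ := by
  have := μ.isMulRightInvariant_of_isProbabilityMeasure
  exact (twirl_diagonal_diag μ continuous_blockDiagonalUnitary
    exists_blockDiagonalUnitary_eq_signDiagonal ρ).symm

/-- **Eq. (52).** The block twirl over the thermodynamic group
`𝒢_T = ∏ₖ U(n k)` with respect to its Haar probability measure depends only on the diagonal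
part of the matrix: `Λ(ρ) = Λ(diag ρ)`. -/
theorem block_twirl_eq_twirl_of_diagonal (p : ℕ) (hp : 1 ≤ p)
    (n : Fin p → ℕ) (hn : ∀ k, 1 ≤ n k)
    (μ : Measure (∀ k, Matrix.unitaryGroup (Fin (n k)) ℂ))
    [μ.IsHaarMeasure] [IsProbabilityMeasure μ]
    (ρ : Matrix (Σ k, Fin (n k)) (Σ k, Fin (n k)) ℂ) :
    (∫ V : ∀ k, Matrix.unitaryGroup (Fin (n k)) ℂ,
        Matrix.blockDiagonal' (fun k => (V k : Matrix (Fin (n k)) (Fin (n k)) ℂ)) * ρ *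
          star (Matrix.blockDiagonal' (fun k => (V k : Matrix (Fin (n k)) (Fin (n k)) ℂ))) ∂μ)
      = ∫ V : ∀ k, Matrix.unitaryGroup (Fin (n k)) ℂ,
          Matrix.blockDiagonal' (fun k => (V k : Matrix (Fin (n k)) (Fin (n k)) ℂ)) *
            Matrix.diagonal (fun i => ρ i i) *
            star (Matrix.blockDiagonal' (fun k => (V k : Matrix (Fin (n k)) (Fin (n k)) ℂ))) ∂μ :=
  block_twirl_eq_twirl_of_diagonal_general p n μ ρ
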